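/- Let C be a shortest odd hole of graph G, x ∈ M_G(C), and suppose the edges of C are partitioned into x-gaps together with a set of x-complete-incident edges. Since ||C|| is odd and every x-gap is even, there exists at least one edge of C that is not contained in any x-gap; consequently, x has two adjacent neighbors on C, i.e., C[N_G(x) ∩ V(C)] contains at least one edge of C. -/

import Mathlib

/-!
Suppose no edge of `C` has both ends adjacent to `x`. Rotate `C` so that it starts at a neighbour
of `x`. As `C` is odd, cutting it at the neighbours of `x` leaves an odd piece `P` between two
non-adjacent neighbours `a`, `b` of `x` with no further neighbour of `x` inside. Then `x` and `P`
form an odd hole of length `|P| + 2`, so by minimality of `C` the rest of `C` is a path of length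
two. That path contains every neighbour of `x` on `C`, so `x` is not major.
-/

open SimpleGraph

variable {V : Type*}

def IsHole (G : SimpleGraph V) {v : V} (C : G.Walk v v) : Prop :=
  C.IsCycle ∧ 4 ≤ C.length ∧
    ∀ x y : V, x ∈ C.support → y ∈ C.support → G.Adj x y → s(x, y) ∈ C.edges

def IsShortestOddHole (G : SimpleGraph V) {v : V} (C : G.Walk v v) : Prop :=
  IsHole G C ∧ Odd C.length ∧
    ∀ (w : V) (D : G.Walk w w), IsHole G D → Odd D.length → C.length ≤ D.length

/-- `x` is a major vertex for the hole `C`: the neighbors of `x` on `C` are not all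
contained in a single path of `C` with two edges. -/
def IsMajor (G : SimpleGraph V) {v : V} (C : G.Walk v v) (x : V) : Prop :=
  ¬ ∃ (a b : V) (Q : G.Walk a b), Q.IsPath ∧ Q.length = 2 ∧
      (∀ e ∈ Q.edges, e ∈ C.edges) ∧
      ∀ y, y ∈ C.support → G.Adj x y → y ∈ Q.support

namespace SimpleGraph.Walk

variable {G : SimpleGraph V} {u v : V}

lemma mem_support_append_comm {p : G.Walk u v} {q : G.Walk v u} {y : V} :
    y ∈ (p.append q).support ↔ y ∈ (q.append p).support := by
  simp only [mem_support_append_iff, or_comm]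

lemma mem_edges_append_comm {p : G.Walk u v} {q : G.Walk v u} {e : Sym2 V} :
    e ∈ (p.append q).edges ↔ e ∈ (q.append p).edges := by
  simp only [edges_append, List.mem_append, or_comm]

lemma length_append_comm (p : G.Walk u v) (q : G.Walk v u) :
    (p.append q).length = (q.append p).length := by
  simp only [length_append, add_comm]

lemma IsCycle.append_comm {p : G.Walk u v} {q : G.Walk v u} (h : (p.append q).IsCycle) :
    (q.append p).IsCycle := by
  rw [isCycle_def, isTrail_def, ne_eq, eq_nil_iff_nil, ← length_eq_zero_iff, edges_append,
    tail_support_append, length_append] at h ⊢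
  exact ⟨List.perm_append_comm.nodup_iff.mp h.1, by omega,
    List.perm_append_comm.nodup_iff.mp h.2.2⟩

lemma IsCycle.eq_or_eq_of_mem_support_of_mem_support {p : G.Walk u v} {q : G.Walk v u}
    (h : (p.append q).IsCycle) {y : V} (hp : y ∈ p.support) (hq : y ∈ q.support) :
    y = u ∨ y = v := by
  have hdisj := List.disjoint_of_nodup_append (tail_support_append p q ▸ h.support_nodup)
  rw [mem_support_iff] at hp hq
  rcases hp with rfl | hp
  · exact .inl rfl
  rcases hq with rfl | hq
  · exact .inr rfl
  exact (hdisj hp hq).elim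

lemma exists_odd_gap (x : V) {a b : V} (P : G.Walk a b) (hodd : Odd P.length)
    (hxa : G.Adj x a) (hxb : G.Adj x b) :
    ∃ (a' b' : V) (P₁ : G.Walk a a') (P' : G.Walk a' b') (P₂ : G.Walk b' b),
      P = P₁.append (P'.append P₂) ∧ Odd P'.length ∧ G.Adj x a' ∧ G.Adj x b' ∧
      ∀ y ∈ P'.support, G.Adj x y → y = a' ∨ y = b' := by
  induction hn : P.length using Nat.strong_induction_on generalizing a b with
  | _ n ih =>
  by_cases hsplit : ∃ y ∈ P.support, G.Adj x y ∧ y ≠ a ∧ y ≠ b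
  · classical
    obtain ⟨y, hy, hxy, hya, hyb⟩ := hsplit
    have hspec := P.take_spec hy
    have hlen : (P.takeUntil y hy).length + (P.dropUntil y hy).length = n := by
      rw [← length_append, hspec, hn]
    have h₁ : (P.takeUntil y hy).length ≠ 0 := fun h => hya (eq_of_length_eq_zero h).symm
    have h₂ : (P.dropUntil y hy).length ≠ 0 := fun h => hyb (eq_of_length_eq_zero h)
    rcases Nat.even_or_odd (P.takeUntil y hy).length with heven | hodd₁
    · have hodd₂ : Odd (P.dropUntil y hy).length := by
        rw [← hspec, length_append] at hodd
        exact (Nat.odd_add'.mp hodd).mpr heven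
      obtain ⟨a', b', P₁, P', P₂, hP, h⟩ := ih _ (by omega) _ hodd₂ hxy hxb rfl
      refine ⟨a', b', (P.takeUntil y hy).append P₁, P', P₂, ?_, h⟩
      nth_rewrite 1 [← hspec]
      rw [hP, append_assoc]
    · obtain ⟨a', b', P₁, P', P₂, hP, h⟩ := ih _ (by omega) _ hodd₁ hxa hxy rfl
      refine ⟨a', b', P₁, P', P₂.append (P.dropUntil y hy), ?_, h⟩
      nth_rewrite 1 [← hspec]
      rw [hP]
      simp only [append_assoc]
  · push Not at hsplit
    refine ⟨a, b, nil, P, nil, by simp, hn ▸ hodd, hxa, hxb, fun y hy hxy => ?_⟩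
    by_cases hya : y = a
    · exact .inl hya
    · exact .inr (hsplit y hy hxy hya)

lemma IsCycle.not_isMajor {x u : V} {c : G.Walk u u} (hc : c.IsCycle)
    (h : ∀ y ∈ c.support, G.Adj x y → y = u ∨ s(u, y) ∈ c.edges) : ¬ IsMajor G c x := by
  cases c with
  | nil => exact (not_isCycle_nil hc).elim
  | @cons _ v _ huv p =>
  have hp := ((cons_isCycle_iff p huv).mp hc).1
  have hpnil : ¬ p.Nil := not_nil_of_isCycle_cons hc
  have hpen : p.penultimate ≠ v := by
    simpa [penultimate_cons_of_not_nil _ _ hpnil] using hc.snd_ne_penultimate.symm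
  refine fun hmaj => hmaj ⟨_, _, cons (p.adj_penultimate hpnil) (cons huv nil), ?_, rfl, ?_, ?_⟩
  · simp [(p.adj_penultimate hpnil).ne, huv.ne, hpen]
  · simp [p.mk_penultimate_end_mem_edges hpnil]
  · intro y hy hxy
    rcases h y hy hxy with rfl | hy
    · simp
    · rw [edges_cons, List.mem_cons, Sym2.eq_iff] at hy
      rcases hy with (⟨-, rfl⟩ | ⟨rfl, rfl⟩) | hy
      · simp
      · simp
      · simp [hp.eq_penultimate_of_mem_edges hy]

end SimpleGraph.Walk

section Holes

open Walk

variable {G : SimpleGraph V} {u v : V}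

lemma IsHole.append_comm {p : G.Walk u v} {q : G.Walk v u} (h : IsHole G (p.append q)) :
    IsHole G (q.append p) := by
  obtain ⟨hcyc, hlen, hchord⟩ := h
  refine ⟨hcyc.append_comm, length_append_comm p q ▸ hlen, fun y z hy hz hyz => ?_⟩
  rw [← mem_support_append_comm] at hy hz
  exact mem_edges_append_comm.mp (hchord y z hy hz hyz)

lemma IsShortestOddHole.append_comm {p : G.Walk u v} {q : G.Walk v u}
    (h : IsShortestOddHole G (p.append q)) : IsShortestOddHole G (q.append p) := by
  obtain ⟨hhole, hodd, hmin⟩ := h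
  rw [length_append_comm] at hodd hmin
  exact ⟨hhole.append_comm, hodd, hmin⟩

lemma IsMajor.append_comm {p : G.Walk u v} {q : G.Walk v u} {x : V}
    (h : IsMajor G (p.append q) x) : IsMajor G (q.append p) x := by
  rintro ⟨a, b, Q, hQ, hlen, hedges, hcover⟩
  exact h ⟨a, b, Q, hQ, hlen, fun e he => mem_edges_append_comm.mpr (hedges e he),
    fun y hy hxy => hcover y (mem_support_append_comm.mp hy) hxy⟩

lemma IsHole.not_isMajor_of_mem_support {C : G.Walk v v} (hC : IsHole G C) {x : V}
    (hx : x ∈ C.support) : ¬ IsMajor G C x := by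
  obtain ⟨p, q, rfl⟩ := mem_support_iff_exists_append.mp hx
  have hC' := hC.append_comm
  exact fun hmaj => hC'.1.not_isMajor (fun y hy hxy => .inr (hC'.2.2 x y (by simp) hy hxy))
    hmaj.append_comm

lemma isHole_cons_concat {x a b : V} {P : G.Walk a b} {Q : G.Walk b a}
    (hD : IsHole G (P.append Q)) (hQ : ¬ Q.Nil) (hP : 2 ≤ P.length) (hx : x ∉ P.support)
    (hxa : G.Adj x a) (hxb : G.Adj x b) (hgap : ∀ y ∈ P.support, G.Adj x y → y = a ∨ y = b)
    (hab : ¬ G.Adj a b) : IsHole G (cons hxa (P.concat hxb.symm)) := by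
  have hPpath := hD.1.isPath_of_append_left hQ
  have hne : a ≠ b := (hPpath.nil_iff_eq).not.mp (not_nil_iff_lt_length.mpr (by omega))
  have hsupp : ∀ y, y ∈ (cons hxa (P.concat hxb.symm)).support ↔ y = x ∨ y ∈ P.support := by
    simp [support_concat, or_comm]
  have hedges : (cons hxa (P.concat hxb.symm)).edges = s(x, a) :: (P.edges ++ [s(b, x)]) := by
    simp [edges_concat]
  refine ⟨(cons_isCycle_iff _ _).mpr ⟨hPpath.concat hx _, ?_⟩, by simp; omega, ?_⟩
  · simpa [edges_concat, hne, hxb.ne] using fun h => hx (P.fst_mem_support_of_mem_edges h)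
  intro y z hy hz hyz
  rw [hsupp] at hy hz
  rcases hy with rfl | hy <;> rcases hz with rfl | hz
  · exact (G.irrefl hyz).elim
  · rcases hgap z hz hyz with rfl | rfl <;> simp [hedges]
  · rcases hgap y hy hyz.symm with rfl | rfl <;> simp [hedges]
  · have hyzD := hD.2.2 y z (by simp [hy]) (by simp [hz]) hyz
    rw [edges_append, List.mem_append] at hyzD
    rcases hyzD with hyzP | hyzQ
    · simp [hedges, hyzP]
    · have hy' := hD.1.eq_or_eq_of_mem_support_of_mem_support hy
        (Q.fst_mem_support_of_mem_edges hyzQ)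
      have hz' := hD.1.eq_or_eq_of_mem_support_of_mem_support hz
        (Q.snd_mem_support_of_mem_edges hyzQ)
      rcases hy' with rfl | rfl <;> rcases hz' with rfl | rfl
      all_goals first | exact (G.irrefl hyz).elim | exact (hab hyz).elim | exact (hab hyz.symm).elim

lemma IsShortestOddHole.exists_adj_adj_of_odd_gap {x a b : V} {P : G.Walk a b} {Q : G.Walk b a}
    (hD : IsShortestOddHole G (P.append Q)) (hmaj : IsMajor G (P.append Q) x)
    (hx : x ∉ P.support) (hodd : Odd P.length) (hxa : G.Adj x a) (hxb : G.Adj x b)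
    (hgap : ∀ y ∈ P.support, G.Adj x y → y = a ∨ y = b) :
    ∃ u v, s(u, v) ∈ (P.append Q).edges ∧ G.Adj x u ∧ G.Adj x v := by
  by_cases hab : G.Adj a b
  · exact ⟨a, b, hD.1.2.2 a b (by simp) (by simp) hab, hxa, hxb⟩
  exfalso
  have hcover : ∀ y ∈ (P.append Q).support, G.Adj x y → y = a ∨ y = b ∨ y ∈ Q.support := by
    intro y hy hxy
    rcases (mem_support_append_iff P Q).mp hy with hy | hy
    · exact (hgap y hy hxy).imp_right .inl
    · exact .inr (.inr hy)
  by_cases hQ : Q.Nil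
  -- `P` is then the whole cycle, and `a = b` is the only neighbour of `x` on it.
  · have hQsupp := nil_iff_support_eq.mp hQ
    refine hD.1.1.not_isMajor (fun y hy hxy => .inl ?_) hmaj
    rcases hcover y hy hxy with h | h | h
    · exact h
    · exact h.trans hQ.eq
    · rw [hQsupp, List.mem_singleton] at h
      exact h.trans hQ.eq
  have hP : 3 ≤ P.length := by
    have : P.length ≠ 1 := fun h => hab (adj_of_length_eq_one h)
    obtain ⟨k, hk⟩ := hodd
    omega
  have hhole := isHole_cons_concat hD.1 hQ (by omega) hx hxa hxb hgap hab
  have hmin := hD.2.2 x _ hhole (by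
    simp only [length_cons, length_concat]
    exact hodd.add_even even_two)
  have hQlen : Q.length = 2 := by
    have hDodd := hD.2.1
    simp only [length_append, length_cons, length_concat] at hmin hDodd
    have : Q.length ≠ 0 := fun h => hQ (length_eq_zero_iff.mp h)
    obtain ⟨k, hk⟩ := hodd
    obtain ⟨m, hm⟩ := hDodd
    omega
  refine hmaj ⟨b, a, Q, hD.1.1.isPath_of_append_right ?_, hQlen, fun e he => by simp [he], ?_⟩
  · exact not_nil_iff_lt_length.mpr (by omega)
  · intro y hy hxy
    rcases hcover y hy hxy with rfl | rfl | h
    · exact Q.end_mem_support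
    · exact Q.start_mem_support
    · exact h

lemma IsShortestOddHole.exists_adj_adj_of_adj_start {x a : V} {C : G.Walk a a}
    (hC : IsShortestOddHole G C) (hmaj : IsMajor G C x) (hx : x ∉ C.support)
    (hxa : G.Adj x a) : ∃ u v, s(u, v) ∈ C.edges ∧ G.Adj x u ∧ G.Adj x v := by
  obtain ⟨a', b', P₁, P', P₂, rfl, hodd, hxa', hxb', hgap⟩ := exists_odd_gap x C hC.2.1 hxa hxa
  have hD := hC.append_comm
  have hmajD := hmaj.append_comm
  rw [← append_assoc] at hD hmajD
  obtain ⟨u, v, he, hu, hv⟩ :=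
    hD.exists_adj_adj_of_odd_gap hmajD (fun h => hx (by simp [h])) hodd hxa' hxb' hgap
  rw [append_assoc] at he
  exact ⟨u, v, mem_edges_append_comm.mpr he, hu, hv⟩

end Holes

/-- A major vertex for a shortest odd hole `C` has two adjacent neighbors on `C`:
some edge of `C` has both ends adjacent to `x`. -/
theorem stmt15 (G : SimpleGraph V) {w : V} (C : G.Walk w w)
    (hC : IsShortestOddHole G C) (x : V) (hmaj : IsMajor G C x) :
    ∃ a b : V, s(a, b) ∈ C.edges ∧ G.Adj x a ∧ G.Adj x b := by
  by_cases hxC : x ∈ C.support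
  · exact absurd hmaj (hC.1.not_isMajor_of_mem_support hxC)
  by_cases hN : ∃ a ∈ C.support, G.Adj x a
  · obtain ⟨a, ha, hxa⟩ := hN
    obtain ⟨p, q, rfl⟩ := Walk.mem_support_iff_exists_append.mp ha
    rw [Walk.mem_support_append_comm] at hxC
    obtain ⟨u, v, he, hu, hv⟩ :=
      hC.append_comm.exists_adj_adj_of_adj_start hmaj.append_comm hxC hxa
    exact ⟨u, v, Walk.mem_edges_append_comm.mpr he, hu, hv⟩
  · push Not at hN
    exact absurd hmaj (hC.1.1.not_isMajor fun y hy hxy => absurd hxy (hN y hy))
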